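/- For t ∈ ω^{<ω} let φ_t: K⁰_t → K¹_t be the homeomorphism flipping only the coordinate Σ_t = ⟨Σ^t_{|t|},0⟩, and set H̃_t := K⁰_t ∖ (⋃_{n: w_n(0)=0} K_{t⌢n} ∪ ⋃_{n: w_n(0)=1} φ_t^{-1}(K_{t⌢n})). Then the sets H̃_t ∪ φ_t[H̃_t], for t ranging over ω^{<ω}, are pairwise disjoint; moreover H_t ⊆ H̃_t, and hence the graph ⋃_t Gr(φ_t|_{H̃_t}) is the graph of a partial injection on 2^ω. -/

import Mathlib

/-- Triangular numbers. -/
def tri (m : ℕ) : ℕ := m * (m + 1) / 2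

/-- The pairing `⟨n,p⟩ := (Σ_{k ≤ n+p} k) + p`. -/
def pairN (n p : ℕ) : ℕ := tri (n + p) + p

/-- `Σ^t_k := Σ_{j<k} (t(j) + 2)`. -/
def sigT (t : List ℕ) (k : ℕ) : ℕ := ((t.take k).map (· + 2)).sum

/-- The set `K_t ⊆ 2^ω`: for each `k < |t|`, the vertical slices numbered
`Σ^t_k, …, Σ^t_k + t(k) + 1` are prescribed: the `i`-th of them is
`(w_{t(k)})_i · 0^∞`, except that the `0`-th one additionally carries a `1`
at position `t(k) + 1` (i.e. equals `(w_{t(k)})₀·0^{t(k)+1-|(w_{t(k)})₀|}·1·0^∞`). -/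
def Kt (w : ℕ → List Bool) (t : List ℕ) : Set (ℕ → Bool) :=
  {α | ∀ k < t.length, ∀ i < t.getD k 0 + 2, ∀ p,
    α (pairN (sigT t k + i) p) =
      if i = 0 ∧ p = t.getD k 0 + 1 then true
      else (w (t.getD k 0)).getD (pairN i p) false}

/-- The clopen piece `K^ε_t := {α ∈ K_t : α(⟨Σ^t_{|t|}, 0⟩) = ε}`. -/
def Keps (w : ℕ → List Bool) (t : List ℕ) (ε : Bool) : Set (ℕ → Bool) :=
  {α | α ∈ Kt w t ∧ α (pairN (sigT t t.length) 0) = ε}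

/-- The homeomorphism `φ_t : K⁰_t → K¹_t`, flipping only the coordinate
`Σ_t = ⟨Σ^t_{|t|}, 0⟩`. -/
def phiT (t : List ℕ) (α : ℕ → Bool) : ℕ → Bool :=
  fun m => if m = pairN (sigT t t.length) 0 then !(α m) else α m

/-- `H̃_t := K⁰_t ∖ (⋃_{n : w_n(0)=0} K_{t⌢n} ∪ ⋃_{n : w_n(0)=1} φ_t⁻¹(K_{t⌢n}))`. -/
def Htilde (w : ℕ → List Bool) (t : List ℕ) : Set (ℕ → Bool) :=
  Keps w t false \
    ((⋃ n ∈ {n : ℕ | (w n).getD 0 false = false}, Kt w (t ++ [n])) ∪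
     (⋃ n ∈ {n : ℕ | (w n).getD 0 false = true}, phiT t ⁻¹' Kt w (t ++ [n])))

/-- `H_t := {α ∈ K⁰_t : (α)_{Σ^t_{|t|}} has infinitely many 1's}`. -/
def Ht (w : ℕ → List Bool) (t : List ℕ) : Set (ℕ → Bool) :=
  {α ∈ Keps w t false | ∀ n, ∃ p ≥ n, α (pairN (sigT t t.length) p) = true}


/-!
Membership in `K_{t⌢n}` prescribes the whole slice `Σ^t_{|t|}` as the marked word
`(w_n)₀ · 0 ⋯ 0 · 1 · 0^∞` with its marker `1` at position `n + 1`. Since `|w_n| = n + 1`,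
the marker determines `n`, so `K_t` and `K_{t'}` are disjoint for incompatible `t, t'`; and the
coordinate `Σ_t = ⟨Σ^t_{|t|}, 0⟩` of such an element is `w_n(0)`. The two unions removed from
`K⁰_t` are chosen so that neither `H̃_t` nor `φ_t[H̃_t]` meets any `K_{t⌢n}`, which separates
`H̃_t ∪ φ_t[H̃_t] ⊆ K_t` from the same set for a proper extension of `t`. As `φ_t` is an
involution, pairwise disjointness makes the union of the graphs a partial injection. Finally a
slice with infinitely many `1`s is not a marked word, whence `H_t ⊆ H̃_t`.
-/

lemma two_mul_tri (s : ℕ) : 2 * tri s = s * (s + 1) := by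
  have : 2 ∣ s * (s + 1) := (Nat.even_mul_succ_self s).two_dvd
  unfold tri; omega

lemma tri_succ (s : ℕ) : tri (s + 1) = tri s + (s + 1) := by
  have h := two_mul_tri s
  have h' := two_mul_tri (s + 1)
  nlinarith

lemma tri_mono : Monotone tri :=
  monotone_nat_of_le_succ fun s => by rw [tri_succ]; omega

lemma pairN_lt_pairN_of_add_lt {n p n' p' : ℕ} (h : n + p < n' + p') :
    pairN n p < pairN n' p' := by
  have hsucc := tri_succ (n + p)
  have hmono : tri (n + p + 1) ≤ tri (n' + p') := tri_mono h
  unfold pairN; omega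

lemma pairN_inj {n p n' p' : ℕ} (h : pairN n p = pairN n' p') : n = n' ∧ p = p' := by
  have hsum : n + p = n' + p' := by
    rcases lt_trichotomy (n + p) (n' + p') with hlt | heq | hgt
    · exact absurd h (pairN_lt_pairN_of_add_lt hlt).ne
    · exact heq
    · exact absurd h (pairN_lt_pairN_of_add_lt hgt).ne'
  unfold pairN at h
  rw [hsum] at h
  omega

lemma le_pairN_zero (p : ℕ) : p ≤ pairN 0 p := by simp [pairN]

lemma sigT_append {t u : List ℕ} {k : ℕ} (h : k ≤ t.length) :
    sigT (t ++ u) k = sigT t k := by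
  unfold sigT; rw [List.take_append_of_le_length h]

lemma sigT_add_lt_sigT_length {t : List ℕ} {k i : ℕ} (hk : k < t.length)
    (hi : i < t.getD k 0 + 2) : sigT t k + i < sigT t t.length := by
  have hsucc : sigT t (k + 1) = sigT t k + (t.getD k 0 + 2) := by
    unfold sigT
    rw [List.map_take, List.map_take, List.sum_take_succ _ _ (by simpa using hk),
      List.getElem_map, List.getD_eq_getElem _ _ hk]
  have hle : sigT t (k + 1) ≤ sigT t t.length := by
    unfold sigT
    rw [List.take_length]
    exact ((List.take_sublist _ _).map _).sum_le_sum fun _ _ => Nat.zero_le _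
  omega

/-- The slice that membership in `K_{t⌢n}` prescribes at `Σ^t_{|t|}`. -/
def markedSlice (w : ℕ → List Bool) (n p : ℕ) : Bool :=
  if p = n + 1 then true else (w n).getD (pairN 0 p) false

lemma markedSlice_zero (w : ℕ → List Bool) (n : ℕ) :
    markedSlice w n 0 = (w n).getD 0 false := rfl

lemma markedSlice_eq_false {w : ℕ → List Bool} (hw : ∀ n, (w n).length = n + 1)
    {n p : ℕ} (hp : n + 2 ≤ p) : markedSlice w n p = false := by
  rw [markedSlice, if_neg (by omega)]
  apply List.getD_eq_default
  have := le_pairN_zero p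
  rw [hw n]; omega

lemma markedSlice_injective {w : ℕ → List Bool} (hw : ∀ n, (w n).length = n + 1) :
    Function.Injective (markedSlice w) := by
  have key : ∀ a b, a < b → markedSlice w a ≠ markedSlice w b := fun a b hab h => by
    have := congrFun h (b + 1)
    rw [markedSlice_eq_false hw (by omega), markedSlice, if_pos rfl] at this
    exact Bool.false_ne_true this
  intro a b h
  by_contra hne
  rcases Nat.lt_or_gt_of_ne hne with hab | hba
  · exact key a b hab h
  · exact key b a hba h.symm

lemma Kt_append_subset (w : ℕ → List Bool) (t u : List ℕ) : Kt w (t ++ u) ⊆ Kt w t := by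
  intro α hα k hk i hi p
  have hk' : k < (t ++ u).length := by simp; omega
  have hget : (t ++ u).getD k 0 = t.getD k 0 := List.getD_append _ _ _ _ hk
  simpa only [sigT_append hk.le, hget] using hα k hk' i (by rwa [hget]) p

lemma apply_pairN_of_mem_Kt_concat {w : ℕ → List Bool} {t : List ℕ} {n : ℕ} {α : ℕ → Bool}
    (h : α ∈ Kt w (t ++ [n])) (p : ℕ) :
    α (pairN (sigT t t.length) p) = markedSlice w n p := by
  have hget : (t ++ [n]).getD t.length 0 = n := by
    simp
  have := h t.length (by simp) 0 (by rw [hget]; omega) p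
  simpa [sigT_append le_rfl, hget, markedSlice] using this

lemma Kt_append_cons_disjoint {w : ℕ → List Bool} (hw : ∀ n, (w n).length = n + 1)
    (u : List ℕ) {a b : ℕ} (hab : a ≠ b) (s s' : List ℕ) :
    Disjoint (Kt w (u ++ a :: s)) (Kt w (u ++ b :: s')) := by
  rw [Set.disjoint_left]
  intro α ha hb
  have ha' := Kt_append_subset w (u ++ [a]) s (by simpa using ha)
  have hb' := Kt_append_subset w (u ++ [b]) s' (by simpa using hb)
  refine hab (markedSlice_injective hw (funext fun p => ?_))
  rw [← apply_pairN_of_mem_Kt_concat ha', ← apply_pairN_of_mem_Kt_concat hb']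

lemma List.eq_append_cons_or_exists_append_cons_ne {α : Type*} :
    ∀ t t' : List α, t ≠ t' →
      (∃ n s, t' = t ++ n :: s) ∨ (∃ n s, t = t' ++ n :: s) ∨
        ∃ u a b s s', a ≠ b ∧ t = u ++ a :: s ∧ t' = u ++ b :: s'
  | [], [], h => absurd rfl h
  | [], b :: s, _ => Or.inl ⟨b, s, rfl⟩
  | a :: r, [], _ => Or.inr (Or.inl ⟨a, r, rfl⟩)
  | a :: r, b :: s, h => by
    by_cases hab : a = b
    · subst hab
      rcases eq_append_cons_or_exists_append_cons_ne r s (fun e => h (e ▸ rfl)) with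
        ⟨n, v, rfl⟩ | ⟨n, v, rfl⟩ | ⟨u, c, d, v, v', hcd, rfl, rfl⟩
      · exact Or.inl ⟨n, v, rfl⟩
      · exact Or.inr (Or.inl ⟨n, v, rfl⟩)
      · exact Or.inr (Or.inr ⟨a :: u, c, d, v, v', hcd, rfl, rfl⟩)
    · exact Or.inr (Or.inr ⟨[], a, b, r, s, hab, rfl, rfl⟩)

lemma phiT_phiT (t : List ℕ) (α : ℕ → Bool) : phiT t (phiT t α) = α := by
  funext m; unfold phiT; split_ifs <;> simp

lemma phiT_apply_of_ne {t : List ℕ} {α : ℕ → Bool} {m : ℕ}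
    (h : m ≠ pairN (sigT t t.length) 0) : phiT t α m = α m := if_neg h

lemma phiT_mem_Kt {w : ℕ → List Bool} {t : List ℕ} {α : ℕ → Bool} (h : α ∈ Kt w t) :
    phiT t α ∈ Kt w t := by
  intro k hk i hi p
  rw [phiT_apply_of_ne fun e => ?_]
  · exact h k hk i hi p
  have := (pairN_inj e).1
  have := sigT_add_lt_sigT_length hk hi
  omega

lemma Htilde_union_image_subset_Kt (w : ℕ → List Bool) (t : List ℕ) :
    Htilde w t ∪ phiT t '' Htilde w t ⊆ Kt w t := by
  rintro β (h | ⟨α, hα, rfl⟩)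
  · exact h.1.1
  · exact phiT_mem_Kt hα.1.1

lemma Htilde_union_image_disjoint_Kt_concat (w : ℕ → List Bool) (t : List ℕ) (n : ℕ) :
    Disjoint (Htilde w t ∪ phiT t '' Htilde w t) (Kt w (t ++ [n])) := by
  rw [Set.disjoint_left]
  intro β hβ hK
  have hflip := apply_pairN_of_mem_Kt_concat hK 0
  rw [markedSlice_zero] at hflip
  rcases hβ with hH | ⟨α, hα, rfl⟩
  · cases hw0 : (w n).getD 0 false
    · exact hH.2 (Or.inl (Set.mem_biUnion hw0 hK))
    · rw [hw0, hH.1.2] at hflip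
      exact Bool.false_ne_true hflip
  · cases hw0 : (w n).getD 0 false
    · rw [hw0, phiT, if_pos rfl, hα.1.2] at hflip
      exact Bool.noConfusion hflip
    · exact hα.2 (Or.inr (Set.mem_biUnion hw0 hK))

lemma Htilde_union_image_disjoint_of_ne {w : ℕ → List Bool}
    (hw : ∀ n, (w n).length = n + 1) {t t' : List ℕ} (h : t ≠ t') :
    Disjoint (Htilde w t ∪ phiT t '' Htilde w t) (Htilde w t' ∪ phiT t' '' Htilde w t') := by
  have extension : ∀ t n s, Disjoint (Htilde w t ∪ phiT t '' Htilde w t)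
      (Htilde w (t ++ n :: s) ∪ phiT (t ++ n :: s) '' Htilde w (t ++ n :: s)) :=
    fun t n s => (Htilde_union_image_disjoint_Kt_concat w t n).mono_right <|
      (Htilde_union_image_subset_Kt w _).trans <| by
        simpa using Kt_append_subset w (t ++ [n]) s
  rcases List.eq_append_cons_or_exists_append_cons_ne t t' h with
    ⟨n, s, rfl⟩ | ⟨n, s, rfl⟩ | ⟨u, a, b, s, s', hab, rfl, rfl⟩
  · exact extension t n s
  · exact (extension t' n s).symm
  · exact (Kt_append_cons_disjoint hw u hab s s').mono
      (Htilde_union_image_subset_Kt w _) (Htilde_union_image_subset_Kt w _)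

lemma eq_of_mem_Htilde_of_mem_Htilde {w : ℕ → List Bool} (hw : ∀ n, (w n).length = n + 1)
    {t t' : List ℕ} {x : ℕ → Bool} (hx : x ∈ Htilde w t) (hx' : x ∈ Htilde w t') : t = t' := by
  by_contra h
  exact Set.disjoint_left.mp (Htilde_union_image_disjoint_of_ne hw h) (Or.inl hx) (Or.inl hx')

lemma eq_of_phiT_eq_phiT {w : ℕ → List Bool} (hw : ∀ n, (w n).length = n + 1)
    {t t' : List ℕ} {x x' : ℕ → Bool} (hx : x ∈ Htilde w t) (hx' : x' ∈ Htilde w t')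
    (h : phiT t x = phiT t' x') : t = t' ∧ x = x' := by
  have ht : t = t' := by
    by_contra hne
    exact Set.disjoint_left.mp (Htilde_union_image_disjoint_of_ne hw hne)
      (Or.inr ⟨x, hx, rfl⟩) (Or.inr ⟨x', hx', h.symm⟩)
  subst ht
  exact ⟨rfl, by simpa only [phiT_phiT] using congrArg (phiT t) h⟩

lemma Ht_subset_Htilde {w : ℕ → List Bool} (hw : ∀ n, (w n).length = n + 1)
    (t : List ℕ) : Ht w t ⊆ Htilde w t := by
  rintro α ⟨hK, hinf⟩
  refine ⟨hK, ?_⟩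
  have not_mem : ∀ β n, β ∈ Kt w (t ++ [n]) →
      (∀ p, 0 < p → β (pairN (sigT t t.length) p) = α (pairN (sigT t t.length) p)) → False := by
    intro β n hβ hagree
    obtain ⟨p, hp, hone⟩ := hinf (n + 2)
    rw [← hagree p (by omega), apply_pairN_of_mem_Kt_concat hβ, markedSlice_eq_false hw hp] at hone
    exact Bool.false_ne_true hone
  rintro (h | h) <;> obtain ⟨n, -, hn⟩ := Set.mem_iUnion₂.mp h
  · exact not_mem α n hn fun _ _ => rfl
  · exact not_mem _ n hn fun p hp => phiT_apply_of_ne fun e => by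
      have := (pairN_inj e).2
      omega

/-- the sets `H̃_t ∪ φ_t[H̃_t]` are pairwise disjoint, `H_t ⊆ H̃_t`,
and `⋃_t Gr(φ_t|_{H̃_t})` is the graph of a partial injection on `2^ω`. -/
theorem stmt19 (w : ℕ → List Bool) (hw : ∀ n, (w n).length = n + 1) :
    (∀ t t' : List ℕ, t ≠ t' →
      Disjoint (Htilde w t ∪ phiT t '' Htilde w t)
        (Htilde w t' ∪ phiT t' '' Htilde w t')) ∧
    (∀ t : List ℕ, Ht w t ⊆ Htilde w t) ∧
    (∀ x x' y : ℕ → Bool, (∃ t, x ∈ Htilde w t ∧ y = phiT t x) →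
      (∃ t, x' ∈ Htilde w t ∧ y = phiT t x') → x = x') ∧
    (∀ x y y' : ℕ → Bool, (∃ t, x ∈ Htilde w t ∧ y = phiT t x) →
      (∃ t, x ∈ Htilde w t ∧ y' = phiT t x) → y = y') := by
  refine ⟨fun t t' => Htilde_union_image_disjoint_of_ne hw, Ht_subset_Htilde hw, ?_, ?_⟩
  · rintro x x' y ⟨t, hx, rfl⟩ ⟨t', hx', he⟩
    exact (eq_of_phiT_eq_phiT hw hx hx' he).2
  · rintro x y y' ⟨t, hx, rfl⟩ ⟨t', hx', rfl⟩
    rw [eq_of_mem_Htilde_of_mem_Htilde hw hx hx']
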